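/- Let ‖·‖ be a smooth and strictly convex norm on ℝ³ with unit ball B, let π be a 2-dimensional affine plane, v a unit vector not parallel to π, and Bₜ = B ∩ (π + tv). Let a, b, c ∈ π be affinely independent. For each t with Bₜ having more than one point, let (z(t), r(t)) be the unique pair with z(t) ∈ π, r(t) > 0 and ‖z(t) + r(t)a + tv‖ = ‖z(t) + r(t)b + tv‖ = ‖z(t) + r(t)c + tv‖ = 1. Then the map t ↦ (z(t), r(t)) is continuous on the open interval (t₁, t₂) where Bₜ has more than one point. -/

import Mathlib

def IsNorm {n : ℕ} (N : (Fin n → ℝ) → ℝ) : Prop :=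
  (∀ x, 0 ≤ N x) ∧ (∀ x, N x = 0 ↔ x = 0) ∧
    (∀ (a : ℝ) x, N (a • x) = |a| * N x) ∧ ∀ x y, N (x + y) ≤ N x + N y

def IsSmoothNorm {n : ℕ} (N : (Fin n → ℝ) → ℝ) : Prop :=
  ∀ x, N x = 1 → ∃! f : (Fin n → ℝ) →ₗ[ℝ] ℝ, f x = 1 ∧ ∀ y, N y ≤ 1 → f y ≤ 1

def IsStrictlyConvexNorm {n : ℕ} (N : (Fin n → ℝ) → ℝ) : Prop :=
  ∀ x y, N x = 1 → N y = 1 → x ≠ y → N ((1 / 2 : ℝ) • (x + y)) < 1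


/-!
Along a sequence `tₖ → t₀` the pairs `(z(tₖ), r(tₖ))` stay bounded, so it suffices that every
subsequential limit `(z, r)` is `(z(t₀), r(t₀))`. The limit solves the equations at `t₀` with
`r ≥ 0`, so by uniqueness only `r = 0` has to be excluded. Then the three vertices collapse to a
point `p` of the unit sphere. By compactness and smoothness, supporting functionals at the
vertices converge to the unique supporting functional `F` at `p`; as each vertex maximises its own
functional over the other two, `F a = F b = F c`. So `F` is constant on `π`, the hyperplane
`F = 1` contains the whole slice `B t₀`, and strict convexity makes that slice a single point.
-/

open Filter Topology

section

variable {n : ℕ} {N : (Fin n → ℝ) → ℝ}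

namespace IsNorm

def toSeminorm (hN : IsNorm N) : Seminorm ℝ (Fin n → ℝ) :=
  Seminorm.of N hN.2.2.2 fun a x => by rw [hN.2.2.1, Real.norm_eq_abs]

theorem continuous (hN : IsNorm N) : Continuous N :=
  continuousOn_univ.1 (hN.toSeminorm.convexOn.continuousOn isOpen_univ)

theorem exists_le_mul_norm (hN : IsNorm N) : ∃ C, 0 < C ∧ ∀ x, N x ≤ C * ‖x‖ :=
  hN.toSeminorm.bound_of_continuous_normedSpace hN.continuous

theorem exists_mul_norm_le (hN : IsNorm N) : ∃ c, 0 < c ∧ ∀ x, c * ‖x‖ ≤ N x := by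
  have hNc := hN.continuous
  obtain ⟨hnonneg, hzero, hsmul, -⟩ := hN
  rcases subsingleton_or_nontrivial (Fin n → ℝ) with h | h
  · exact ⟨1, one_pos, fun x => by simp [Subsingleton.elim x 0, hnonneg 0]⟩
  obtain ⟨x₀, hx₀, hmin⟩ := (isCompact_sphere (0 : Fin n → ℝ) 1).exists_isMinOn
    (NormedSpace.sphere_nonempty.2 zero_le_one) hNc.continuousOn
  have hx₀ : ‖x₀‖ = 1 := by simpa using hx₀
  refine ⟨N x₀, (hnonneg x₀).lt_of_ne fun h => ?_, fun x => ?_⟩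
  · simp [(hzero x₀).1 h.symm] at hx₀
  rcases eq_or_ne x 0 with rfl | hx
  · simp [hnonneg 0]
  have hnx : 0 < ‖x‖ := norm_pos_iff.2 hx
  have : N x₀ ≤ N (‖x‖⁻¹ • x) := hmin (by simp [norm_smul, hnx.ne'])
  rw [hsmul, abs_of_pos (inv_pos.2 hnx)] at this
  rwa [← le_inv_mul_iff₀' hnx]

theorem apply_le {f : (Fin n → ℝ) →ₗ[ℝ] ℝ} (hN : IsNorm N) (hf : ∀ y, N y ≤ 1 → f y ≤ 1)
    (x : Fin n → ℝ) : f x ≤ N x := by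
  obtain ⟨hnonneg, hzero, hsmul, -⟩ := hN
  rcases (hnonneg x).eq_or_lt with h | h
  · simp [(hzero x).1 h.symm, hnonneg 0]
  have : f ((N x)⁻¹ • x) ≤ 1 :=
    hf _ (by rw [hsmul, abs_of_pos (inv_pos.2 h), inv_mul_cancel₀ h.ne'])
  rwa [map_smul, smul_eq_mul, inv_mul_le_iff₀ h, mul_one] at this

theorem abs_apply_le {f : (Fin n → ℝ) →ₗ[ℝ] ℝ} (hN : IsNorm N) (hf : ∀ y, N y ≤ 1 → f y ≤ 1)
    (x : Fin n → ℝ) : |f x| ≤ N x := by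
  have hneg : N (-x) = N x := map_neg_eq_map hN.toSeminorm x
  refine abs_le.2 ⟨?_, hN.apply_le hf x⟩
  linarith [hN.apply_le hf (-x), map_neg f x]

end IsNorm

def IsSupportingFunctional (N : (Fin n → ℝ) → ℝ) (x : Fin n → ℝ)
    (f : (Fin n → ℝ) →ₗ[ℝ] ℝ) : Prop :=
  f x = 1 ∧ ∀ y, N y ≤ 1 → f y ≤ 1

theorem IsStrictlyConvexNorm.eq_of_isSupportingFunctional (hN : IsNorm N)
    (hsc : IsStrictlyConvexNorm N) {f : (Fin n → ℝ) →ₗ[ℝ] ℝ} {x y : Fin n → ℝ}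
    (hx : IsSupportingFunctional N x f) (hy : IsSupportingFunctional N y f)
    (hxN : N x ≤ 1) (hyN : N y ≤ 1) : x = y := by
  by_contra hxy
  have hx1 : N x = 1 := le_antisymm hxN (hx.1 ▸ hN.apply_le hx.2 x)
  have hy1 : N y = 1 := le_antisymm hyN (hy.1 ▸ hN.apply_le hx.2 y)
  have hmid : f ((1 / 2 : ℝ) • (x + y)) = 1 := by
    rw [map_smul, map_add, hx.1, hy.1]; norm_num
  linarith [hsc x y hx1 hy1 hxy, hmid ▸ hN.apply_le hx.2 ((1 / 2 : ℝ) • (x + y))]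

theorem IsSmoothNorm.tendsto_apply_of_isSupportingFunctional (hN : IsNorm N)
    (hsm : IsSmoothNorm N) {x : ℕ → Fin n → ℝ} {p : Fin n → ℝ} (hp : N p = 1)
    (hx : Tendsto x atTop (𝓝 p)) {f : ℕ → (Fin n → ℝ) →ₗ[ℝ] ℝ}
    (hf : ∀ k, IsSupportingFunctional N (x k) (f k)) {F : (Fin n → ℝ) →ₗ[ℝ] ℝ}
    (hF : IsSupportingFunctional N p F) (y : Fin n → ℝ) :
    Tendsto (fun k => f k y) atTop (𝓝 (F y)) := by
  obtain ⟨C, hC0, hC⟩ := hN.exists_le_mul_norm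
  set g : ℕ → (Fin n → ℝ) →L[ℝ] ℝ := fun k => LinearMap.toContinuousLinearMap (f k)
  have hg : ∀ k, g k ∈ Metric.closedBall 0 C := fun k => by
    rw [mem_closedBall_zero_iff]
    refine ContinuousLinearMap.opNorm_le_bound _ hC0.le fun w => ?_
    rw [Real.norm_eq_abs]
    exact (hN.abs_apply_le (hf k).2 w).trans (hC w)
  suffices Tendsto g atTop (𝓝 (LinearMap.toContinuousLinearMap F)) by
    simpa [g, Function.comp_def] using
      ((ContinuousLinearMap.apply ℝ ℝ y).continuous.tendsto _).comp this
  refine tendsto_of_subseq_tendsto fun ns hns => ?_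
  obtain ⟨G, -, ms, hms, hG⟩ := tendsto_subseq_of_bounded Metric.isBounded_closedBall
    fun k => hg (ns k)
  have hGp : G p = 1 := by
    have hlim : Tendsto (fun k => g (ns (ms k)) (x (ns (ms k)))) atTop (𝓝 (G p)) :=
      ((by fun_prop : Continuous fun q : ((Fin n → ℝ) →L[ℝ] ℝ) × (Fin n → ℝ) => q.1 q.2).tendsto
        (G, p)).comp (hG.prodMk_nhds ((hx.comp hns).comp hms.tendsto_atTop))
    refine tendsto_nhds_unique hlim ?_
    simp [g, (hf _).1]
  have hGball : ∀ y, N y ≤ 1 → G y ≤ 1 := fun y hy =>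
    le_of_tendsto (((ContinuousLinearMap.apply ℝ ℝ y).continuous.tendsto _).comp hG)
      (Eventually.of_forall fun k => by simpa [g] using (hf _).2 y hy)
  have hGF : (G : (Fin n → ℝ) →ₗ[ℝ] ℝ) = F := (hsm p hp).unique ⟨hGp, hGball⟩ hF
  refine ⟨ms, ?_⟩
  rwa [show LinearMap.toContinuousLinearMap F = G by ext; simp [← hGF]]

theorem IsSmoothNorm.apply_nonpos_of_tendsto (hN : IsNorm N) (hsm : IsSmoothNorm N)
    {X : ℕ → Fin n → ℝ} {p d : Fin n → ℝ} (hp : N p = 1) (hX : Tendsto X atTop (𝓝 p))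
    (hXN : ∀ k, N (X k) = 1) {R : ℕ → ℝ} (hR : ∀ k, 0 < R k) (hd : ∀ k, N (X k + R k • d) ≤ 1)
    {F : (Fin n → ℝ) →ₗ[ℝ] ℝ} (hF : IsSupportingFunctional N p F) : F d ≤ 0 := by
  choose f hf using fun k => (hsm (X k) (hXN k)).exists
  refine le_of_tendsto (hsm.tendsto_apply_of_isSupportingFunctional hN hp hX hf hF d)
    (Eventually.of_forall fun k => ?_)
  have := (hf k).2 _ (hd k)
  rw [map_add, map_smul, (hf k).1, smul_eq_mul] at this
  nlinarith [hR k]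

theorem LinearMap.apply_eq_of_mem_affineSpan {R E M : Type*} [Ring R] [AddCommGroup E]
    [Module R E] [AddCommGroup M] [Module R M] (F : E →ₗ[R] M) {s : Set E} {c : M}
    (hs : ∀ x ∈ s, F x = c) {x : E} (hx : x ∈ affineSpan R s) : F x = c :=
  affineSpan_induction hx hs fun r u v w hu hv hw => by simp [hu, hv, hw]

def IsInscribed (N : (Fin n → ℝ) → ℝ) (π : AffineSubspace ℝ (Fin n → ℝ))
    (s : Set (Fin n → ℝ)) (v : Fin n → ℝ) (t : ℝ) (q : (Fin n → ℝ) × ℝ) : Prop :=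
  q.1 ∈ π ∧ 0 < q.2 ∧ ∀ w ∈ s, N (q.1 + q.2 • w + t • v) = 1

theorem tendsto_homothet {ι : Type*} {l : Filter ι} {u : ι → ℝ} {q : ι → (Fin n → ℝ) × ℝ}
    {t : ℝ} {z : Fin n → ℝ} {r : ℝ} (hu : Tendsto u l (𝓝 t)) (hq : Tendsto q l (𝓝 (z, r)))
    (v w : Fin n → ℝ) :
    Tendsto (fun k => (q k).1 + (q k).2 • w + u k • v) l (𝓝 (z + r • w + t • v)) :=
  ((hq.fst_nhds).add (hq.snd_nhds.smul_const w)).add (hu.smul_const v)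

theorem IsNorm.exists_norm_le_of_isInscribed (hN : IsNorm N) {π : AffineSubspace ℝ (Fin n → ℝ)}
    {s : Set (Fin n → ℝ)} (hs : s.Nontrivial) (v : Fin n → ℝ) (T : ℝ) :
    ∃ C, ∀ t q, ‖t‖ ≤ T → IsInscribed N π s v t q → ‖q‖ ≤ C := by
  obtain ⟨a, ha, b, hb, hab⟩ := hs
  obtain ⟨κ, hκ, hκN⟩ := hN.exists_mul_norm_le
  have hNab : 0 < N (a - b) := (hN.1 _).lt_of_ne' (mt (hN.2.1 _).1 (sub_ne_zero.2 hab))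
  have hsphere : ∀ x, N x = 1 → ‖x‖ ≤ 1 / κ := fun x hx => (le_div_iff₀' hκ).2 (hx ▸ hκN x)
  refine ⟨max (1 / κ + 2 / N (a - b) * ‖a‖ + T * ‖v‖) (2 / N (a - b)), fun t q ht hq => ?_⟩
  obtain ⟨-, hr, hq⟩ := hq
  have hr_le : q.2 ≤ 2 / N (a - b) := by
    have h : N (q.2 • (a - b)) ≤ N (q.1 + q.2 • a + t • v) + N (q.1 + q.2 • b + t • v) := by
      rw [show q.2 • (a - b) = q.1 + q.2 • a + t • v - (q.1 + q.2 • b + t • v) by module]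
      exact map_sub_le_add hN.toSeminorm _ _
    rw [hN.2.2.1, abs_of_pos hr, hq a ha, hq b hb] at h
    rw [le_div_iff₀ hNab]
    linarith
  have hz : ‖q.1‖ ≤ 1 / κ + 2 / N (a - b) * ‖a‖ + T * ‖v‖ := calc
    ‖q.1‖ = ‖q.1 + q.2 • a + t • v - q.2 • a - t • v‖ := by congr 1; abel
    _ ≤ ‖q.1 + q.2 • a + t • v‖ + ‖q.2 • a‖ + ‖t • v‖ :=
      (norm_sub_le _ _).trans (by gcongr; exact norm_sub_le _ _)
    _ ≤ 1 / κ + 2 / N (a - b) * ‖a‖ + T * ‖v‖ := by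
      rw [norm_smul, norm_smul, Real.norm_of_nonneg hr.le]
      gcongr
      exact hsphere _ (hq a ha)
  rw [Prod.norm_def, Real.norm_of_nonneg hr.le]
  exact max_le_max hz hr_le

theorem IsSmoothNorm.subsingleton_slice_of_tendsto_isInscribed (hN : IsNorm N)
    (hsm : IsSmoothNorm N) (hsc : IsStrictlyConvexNorm N) {π : AffineSubspace ℝ (Fin n → ℝ)}
    {s : Set (Fin n → ℝ)} (hspan : affineSpan ℝ s = π) {v : Fin n → ℝ} {u : ℕ → ℝ}
    {q : ℕ → (Fin n → ℝ) × ℝ} (hq : ∀ k, IsInscribed N π s v (u k) (q k)) {t : ℝ}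
    {z : Fin n → ℝ} (hz : z ∈ π) (hu : Tendsto u atTop (𝓝 t))
    (hqz : Tendsto q atTop (𝓝 (z, 0))) :
    ({x | N x ≤ 1} ∩ (fun p => p + t • v) '' (π : Set (Fin n → ℝ))).Subsingleton := by
  obtain ⟨w₀, hw₀⟩ := (affineSpan_nonempty ℝ).1 ⟨z, hspan ▸ hz⟩
  have hX : ∀ w, Tendsto (fun k => (q k).1 + (q k).2 • w + u k • v) atTop (𝓝 (z + t • v)) :=
    fun w => by simpa using tendsto_homothet hu hqz v w
  have hp : N (z + t • v) = 1 := (isClosed_eq hN.continuous continuous_const).mem_of_tendsto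
    (hX w₀) (Eventually.of_forall fun k => (hq k).2.2 w₀ hw₀)
  obtain ⟨F, hF, -⟩ := hsm _ hp
  have hinward : ∀ w ∈ s, ∀ w' ∈ s, F (w' - w) ≤ 0 := fun w hw w' hw' =>
    hsm.apply_nonpos_of_tendsto hN hp (hX w) (fun k => (hq k).2.2 w hw) (fun k => (hq k).2.1)
      (fun k => le_of_eq <| by rw [← (hq k).2.2 w' hw']; congr 1; module) hF
  have hFs : ∀ w ∈ s, F w = F w₀ := fun w hw => by
    linarith [hinward w hw w₀ hw₀, hinward w₀ hw₀ w hw, map_sub F w w₀, map_sub F w₀ w]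
  have hslice : ∀ y ∈ π, IsSupportingFunctional N (y + t • v) F := fun y hy => by
    refine ⟨?_, hF.2⟩
    have hFπ : ∀ y ∈ π, F y = F w₀ := fun y hy => F.apply_eq_of_mem_affineSpan hFs (hspan ▸ hy)
    rw [map_add, hFπ y hy, ← hFπ z hz, ← map_add, hF.1]
  rintro _ ⟨hx, x, hxπ, rfl⟩ _ ⟨hy, y, hyπ, rfl⟩
  exact hsc.eq_of_isSupportingFunctional hN (hslice x hxπ) (hslice y hyπ) hx hy

theorem IsSmoothNorm.exists_subseq_tendsto_of_isInscribed (hN : IsNorm N)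
    (hsm : IsSmoothNorm N) (hsc : IsStrictlyConvexNorm N) {π : AffineSubspace ℝ (Fin n → ℝ)}
    {s : Set (Fin n → ℝ)} (hspan : affineSpan ℝ s = π) (hs : s.Nontrivial) {v : Fin n → ℝ}
    {t₀ : ℝ}
    (hslice : ({x | N x ≤ 1} ∩ (fun p => p + t₀ • v) '' (π : Set (Fin n → ℝ))).Nontrivial)
    {q₀ : (Fin n → ℝ) × ℝ} (huniq : ∀ q, IsInscribed N π s v t₀ q → q = q₀) {u : ℕ → ℝ}
    (hu : Tendsto u atTop (𝓝 t₀)) {q : ℕ → (Fin n → ℝ) × ℝ}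
    (hq : ∀ k, IsInscribed N π s v (u k) (q k)) :
    ∃ ms : ℕ → ℕ, Tendsto (q ∘ ms) atTop (𝓝 q₀) := by
  obtain ⟨T, hT⟩ := (Metric.isBounded_range_of_tendsto u hu).exists_norm_le
  obtain ⟨C, hC⟩ := hN.exists_norm_le_of_isInscribed hs v T
  obtain ⟨⟨z, r⟩, -, ms, hms, hlim⟩ := tendsto_subseq_of_bounded (Metric.isBounded_closedBall)
    fun k => mem_closedBall_zero_iff.2 (hC _ _ (hT _ ⟨k, rfl⟩) (hq k))
  have hu' := hu.comp hms.tendsto_atTop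
  have hz : z ∈ π := π.closed_of_finiteDimensional.mem_of_tendsto hlim.fst_nhds
    (Eventually.of_forall fun k => (hq _).1)
  rcases (ge_of_tendsto hlim.snd_nhds (Eventually.of_forall fun k => (hq _).2.1.le)).eq_or_lt
    with hr | hr
  · subst hr
    exact absurd (hsm.subsingleton_slice_of_tendsto_isInscribed hN hsc hspan (fun k => hq (ms k))
      hz hu' hlim) hslice.not_subsingleton
  · refine ⟨ms, huniq (z, r) ⟨hz, hr, fun w hw => ?_⟩ ▸ hlim⟩
    exact (isClosed_eq hN.continuous continuous_const).mem_of_tendsto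
      (tendsto_homothet hu' hlim v w) (Eventually.of_forall fun k => (hq _).2.2 w hw)

end

theorem continuity_of_inscribed_homothets_general (N : (Fin 3 → ℝ) → ℝ) (hN : IsNorm N)
    (hsm : IsSmoothNorm N) (hsc : IsStrictlyConvexNorm N)
    (π : AffineSubspace ℝ (Fin 3 → ℝ)) (hπ : Module.finrank ℝ π.direction = 2)
    (v : Fin 3 → ℝ)
    (a b c : Fin 3 → ℝ) (ha : a ∈ π) (hb : b ∈ π) (hc : c ∈ π)
    (habc : AffineIndependent ℝ ![a, b, c])
    (B : ℝ → Set (Fin 3 → ℝ))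
    (hB : B = fun t => {x | N x ≤ 1} ∩ ((fun p => p + t • v) '' (π : Set (Fin 3 → ℝ))))
    (t₁ t₂ : ℝ)
    (ht : ∀ t : ℝ, t ∈ Set.Ioo t₁ t₂ ↔ ∃ x ∈ B t, ∃ y ∈ B t, x ≠ y)
    (zr : ℝ → (Fin 3 → ℝ) × ℝ)
    (hzr : ∀ t ∈ Set.Ioo t₁ t₂, (zr t).1 ∈ π ∧ 0 < (zr t).2 ∧
      N ((zr t).1 + (zr t).2 • a + t • v) = 1 ∧
      N ((zr t).1 + (zr t).2 • b + t • v) = 1 ∧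
      N ((zr t).1 + (zr t).2 • c + t • v) = 1)
    (huniq : ∀ t ∈ Set.Ioo t₁ t₂, ∀ (z : Fin 3 → ℝ) (r : ℝ), z ∈ π → 0 < r →
      N (z + r • a + t • v) = 1 → N (z + r • b + t • v) = 1 →
      N (z + r • c + t • v) = 1 → (z, r) = zr t) :
    ContinuousOn zr (Set.Ioo t₁ t₂) := by
  have hspan : affineSpan ℝ (Set.range ![a, b, c]) = π :=
    habc.affineSpan_eq_of_le_of_card_eq_finrank_add_one
      (affineSpan_le.2 <| Set.range_subset_iff.2 fun i => by fin_cases i <;> assumption)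
      (by simp [hπ])
  have hs : (Set.range ![a, b, c]).Nontrivial :=
    ⟨a, ⟨0, rfl⟩, b, ⟨1, rfl⟩, habc.injective.ne (by decide : (0 : Fin 3) ≠ 1)⟩
  have hins : ∀ t ∈ Set.Ioo t₁ t₂, ∀ q,
      IsInscribed N π (Set.range ![a, b, c]) v t q ↔ q = zr t := fun t ht q => by
    refine ⟨fun ⟨hz, hr, hw⟩ => huniq t ht q.1 q.2 hz hr (hw _ ⟨0, rfl⟩) (hw _ ⟨1, rfl⟩)
      (hw _ ⟨2, rfl⟩), ?_⟩
    rintro rfl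
    obtain ⟨hz, hr, hNa, hNb, hNc⟩ := hzr t ht
    exact ⟨hz, hr, Set.forall_mem_range.2 fun i => by fin_cases i <;> assumption⟩
  refine isOpen_Ioo.continuousOn_iff.2 fun t₀ ht₀ => tendsto_of_subseq_tendsto fun ns hns => ?_
  obtain ⟨M, hM⟩ := eventually_atTop.1 (hns.eventually (isOpen_Ioo.mem_nhds ht₀))
  obtain ⟨ms, hms⟩ := hsm.exists_subseq_tendsto_of_isInscribed hN hsc hspan hs
    (by subst hB; exact (ht t₀).1 ht₀) (fun q hq => (hins t₀ ht₀ q).1 hq)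
    (hns.comp (tendsto_add_atTop_nat M)) fun k => (hins _ (hM _ (Nat.le_add_left M k)) _).2 rfl
  exact ⟨(· + M) ∘ ms, hms⟩

theorem continuity_of_inscribed_homothets (N : (Fin 3 → ℝ) → ℝ) (hN : IsNorm N)
    (hsm : IsSmoothNorm N) (hsc : IsStrictlyConvexNorm N)
    (π : AffineSubspace ℝ (Fin 3 → ℝ)) (hπ : Module.finrank ℝ π.direction = 2)
    (v : Fin 3 → ℝ) (hv : N v = 1) (hvπ : v ∉ π.direction)
    (a b c : Fin 3 → ℝ) (ha : a ∈ π) (hb : b ∈ π) (hc : c ∈ π)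
    (habc : AffineIndependent ℝ ![a, b, c])
    (B : ℝ → Set (Fin 3 → ℝ))
    (hB : B = fun t => {x | N x ≤ 1} ∩ ((fun p => p + t • v) '' (π : Set (Fin 3 → ℝ))))
    (t₁ t₂ : ℝ)
    (ht : ∀ t : ℝ, t ∈ Set.Ioo t₁ t₂ ↔ ∃ x ∈ B t, ∃ y ∈ B t, x ≠ y)
    (zr : ℝ → (Fin 3 → ℝ) × ℝ)
    (hzr : ∀ t ∈ Set.Ioo t₁ t₂, (zr t).1 ∈ π ∧ 0 < (zr t).2 ∧
      N ((zr t).1 + (zr t).2 • a + t • v) = 1 ∧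
      N ((zr t).1 + (zr t).2 • b + t • v) = 1 ∧
      N ((zr t).1 + (zr t).2 • c + t • v) = 1)
    (huniq : ∀ t ∈ Set.Ioo t₁ t₂, ∀ (z : Fin 3 → ℝ) (r : ℝ), z ∈ π → 0 < r →
      N (z + r • a + t • v) = 1 → N (z + r • b + t • v) = 1 →
      N (z + r • c + t • v) = 1 → (z, r) = zr t) :
    ContinuousOn zr (Set.Ioo t₁ t₂) :=
  continuity_of_inscribed_homothets_general N hN hsm hsc π hπ v a b c ha hb hc habc B hB t₁ t₂ ht zr
    hzr huniq
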